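/- Let G be a cograph with cotree T and x a vertex to be inserted. A node u of T is completion-forced if and only if there exists a unique cograph completion of G_u + x obtained by adding only edges incident to x, namely the one adding all missing edges between x and V(u). -/

import Mathlib

universe u

def IsCograph {α : Type*} (G : SimpleGraph α) : Prop :=
  ¬ ∃ f : Fin 4 → α, Function.Injective f ∧
      ∀ i j : Fin 4, G.Adj (f i) (f j) ↔ (i.val + 1 = j.val ∨ j.val + 1 = i.val)

inductive Cotree (V : Type u) : Type u where
  | leaf : V → Cotree V
  | node : Bool → List (Cotree V) → Cotree V

namespace Cotree

variable {V : Type u}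

def leaves : Cotree V → List V
  | .leaf v => [v]
  | .node _ ts => ts.attach.flatMap (fun t => t.1.leaves)

decreasing_by simp_wf; have := List.sizeOf_lt_of_mem t.2; omega

def subtrees : Cotree V → List (Cotree V)
  | .leaf v => [.leaf v]
  | .node b ts => .node b ts :: ts.attach.flatMap (fun t => t.1.subtrees)

decreasing_by simp_wf; have := List.sizeOf_lt_of_mem t.2; omega

def children : Cotree V → List (Cotree V)
  | .leaf _ => []
  | .node _ ts => ts

def isSeries : Cotree V → Prop
  | .node true _ => True
  | _ => False

def isParallel : Cotree V → Prop
  | .node false _ => True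
  | _ => False

def adj : Cotree V → V → V → Prop
  | .leaf _, _, _ => False
  | .node b ts, x, y =>
      (∃ t ∈ ts.attach, adj t.1 x y) ∨
      (b = true ∧ ∃ t ∈ ts.attach, ∃ s ∈ ts.attach,
        t.1 ≠ s.1 ∧ x ∈ t.1.leaves ∧ y ∈ s.1.leaves)

decreasing_by simp_wf; have := List.sizeOf_lt_of_mem t.2; omega

def valid : Cotree V → Prop
  | .leaf _ => True
  | .node b ts => 2 ≤ ts.length ∧ ∀ t ∈ ts.attach, valid t.1 ∧
      ∀ b' ts', t.1 = .node b' ts' → b' ≠ b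

decreasing_by simp_wf; have := List.sizeOf_lt_of_mem t.2; omega

def hollow (N : Set V) (t : Cotree V) : Prop := ∀ v ∈ t.leaves, v ∉ N
def full (N : Set V) (t : Cotree V) : Prop := ∀ v ∈ t.leaves, v ∈ N
def uniform (N : Set V) (t : Cotree V) : Prop := full N t ∨ hollow N t
def mixed (N : Set V) (t : Cotree V) : Prop := ¬ uniform N t

def forced (N : Set V) : Cotree V → Prop
  | .leaf v => v ∈ N
  | .node b ts =>
      full N (.node b ts) ∨
      (b = false ∧ ∀ t ∈ ts, ¬ hollow N t) ∨
      (b = true ∧ ∀ t ∈ ts.attach, forced N t.1)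

decreasing_by simp_wf; have := List.sizeOf_lt_of_mem t.2; omega

def eligible (N : Set V) : Cotree V → Cotree V → Prop
  | .leaf v, u => u = .leaf v
  | .node b ts, u => u = .node b ts ∨
      ∃ t ∈ ts.attach, eligible N t.1 u ∧
        (b = false → ∀ s ∈ ts, s ≠ t.1 → hollow N s)

decreasing_by simp_wf; have := List.sizeOf_lt_of_mem t.2; omega

def IsLcaLeaves (T u : Cotree V) (x y : V) : Prop :=
  u ∈ T.subtrees ∧ x ∈ u.leaves ∧ y ∈ u.leaves ∧
    ∀ c ∈ u.children, ¬ (x ∈ c.leaves ∧ y ∈ c.leaves)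

def IsLcaNodeLeaf (T w u : Cotree V) (y : V) : Prop :=
  w ∈ T.subtrees ∧ u ∈ w.subtrees ∧ y ∈ w.leaves ∧
    ∀ c ∈ w.children, ¬ (u ∈ c.subtrees ∧ y ∈ c.leaves)

def graphOf (T : Cotree V) : SimpleGraph V :=
  SimpleGraph.fromRel (fun a b => T.adj a b)

def graphPlus (T : Cotree V) (N : Set V) : SimpleGraph (Option V) :=
  SimpleGraph.fromRel (fun a b =>
    match a, b with
    | some u, some v => T.adj u v
    | none, some v => v ∈ N
    | _, _ => False)

def IsConstrainedCompletion (T : Cotree V) (Nx N' : Set V) : Prop :=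
  Nx ⊆ N' ∧ (∀ v ∈ N', v ∈ T.leaves) ∧ IsCograph (graphPlus T N')

def IsMinimalConstrainedCompletion (T : Cotree V) (Nx N' : Set V) : Prop :=
  IsConstrainedCompletion T Nx N' ∧
    ∀ N'' ⊆ N', IsConstrainedCompletion T Nx N'' → N'' = N'

def IsInsertionNode (T : Cotree V) (N' : Set V) (u : Cotree V) : Prop :=
  u ∈ T.subtrees ∧ mixed N' u ∧ (∀ c ∈ u.children, uniform N' c) ∧
    ∀ y ∈ T.leaves, y ∉ u.leaves →
      (y ∈ N' ↔ ∃ w, IsLcaNodeLeaf T w u y ∧ w.isSeries)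

def IsCMInsertionNode (T : Cotree V) (Nx : Set V) (u : Cotree V) : Prop :=
  ∃ N', IsMinimalConstrainedCompletion T Nx N' ∧ IsInsertionNode T N' u

def anchored (T u : Cotree V) (Nx : Set V) : Set V :=
  Nx ∪ {y | y ∈ T.leaves ∧ y ∉ u.leaves ∧ ∃ w, IsLcaNodeLeaf T w u y ∧ w.isSeries}
     ∪ {y | ∃ c ∈ u.children, ¬ hollow Nx c ∧ y ∈ c.leaves}

end Cotree

/-!
Both directions go by induction on the cotree, with `none` playing the new vertex `x`. Since
`G_u` is a cograph, every induced `P₄` of `G_u + x` passes through `x`.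

If `u` is forced, every completion `N'` is all of `V(u)`: this is immediate at a full node, and
at a series node it follows from the induction hypothesis applied to the restriction of `N'` to
each child. At a parallel node whose children all meet `N(x)`, a leaf `v ∉ N'` of a child `t`
yields an edge `a c` of the connected graph `G_t` with `a ∈ N'`, `c ∉ N'`; with a neighbour `z`
of `x` in another child this gives the induced path `c - a - x - z`.

If `u` is not forced, there is a smaller completion: at a parallel node with a hollow child `t`
take `V(u) \ V(t)`; at a series node with a non-forced child `t` extend a smaller completion of
`t` (induction) by `V(u) \ V(t)`. These are cographs because `P₄` and its complement are both
connected, so a `P₄` through `x` cannot cross a cut with no edges, nor one with all edges.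
-/

namespace SimpleGraph

variable {α β : Type*} {G : SimpleGraph α}

lemma isCograph_iff_isEmpty_embedding : IsCograph G ↔ IsEmpty (pathGraph 4 ↪g G) := by
  rw [IsCograph, not_exists, isEmpty_iff]
  refine ⟨fun h f => h f ⟨f.injective, fun i j => f.map_adj_iff.trans pathGraph_adj⟩,
    fun h f ⟨hinj, hadj⟩ => h ⟨⟨f, hinj⟩, fun {i j} => (hadj i j).trans pathGraph_adj.symm⟩⟩

lemma not_isCograph_of_embedding (f : pathGraph 4 ↪g G) : ¬ IsCograph G :=
  fun h => (isCograph_iff_isEmpty_embedding.1 h).false f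

lemma not_isCograph_of_induced_path {a b c d : α} (hab : G.Adj a b) (hbc : G.Adj b c)
    (hcd : G.Adj c d) (hac : ¬ G.Adj a c) (had : ¬ G.Adj a d) (hbd : ¬ G.Adj b d)
    (hac' : a ≠ c) (had' : a ≠ d) (hbd' : b ≠ d) : ¬ IsCograph G := by
  refine not_isCograph_of_embedding ⟨⟨![a, b, c, d], fun i j hij => ?_⟩, fun {i j} => ?_⟩
  · fin_cases i <;> fin_cases j <;> simp_all [hab.ne, hbc.ne, hcd.ne, hab.ne', hbc.ne', hcd.ne',
      eq_comm]
  · change G.Adj (![a, b, c, d] i) (![a, b, c, d] j) ↔ _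
    rw [pathGraph_adj]
    fin_cases i <;> fin_cases j <;> simp_all [G.adj_comm]

def Embedding.ofAdjIff {H : SimpleGraph α} {K : SimpleGraph β} (f : K ↪g G)
    (h : ∀ a b, G.Adj (f a) (f b) ↔ H.Adj (f a) (f b)) : K ↪g H :=
  ⟨f.toEmbedding, fun {a b} => (h a b).symm.trans f.map_adj_iff⟩

lemma Preconnected.mem_of_forall_adj {K : SimpleGraph β} (hK : K.Preconnected) {S : Set β}
    (hS : ∀ a b, K.Adj a b → a ∈ S → b ∈ S) {a b : β} (ha : a ∈ S) : b ∈ S := by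
  by_contra hb
  obtain ⟨p⟩ := hK a b
  obtain ⟨d, -, hd₁, hd₂⟩ := p.exists_boundary_dart S ha hb
  exact hd₂ (hS _ _ d.adj hd₁)

-- The complement of `P₄` is again a path, `1 - 3 - 0 - 2`.
lemma pathGraph_four_compl_preconnected : (pathGraph 4)ᶜ.Preconnected :=
  (pathGraph_preconnected 4).map ⟨![1, 3, 0, 2], fun {i j} h => by
    rw [pathGraph_adj] at h
    fin_cases i <;> fin_cases j <;> simp_all [pathGraph_adj]⟩ (by decide)

lemma pathGraph_four_embedding_exists_adj (f : pathGraph 4 ↪g G) (i : Fin 4) :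
    ∃ j, G.Adj (f i) (f j) :=
  let ⟨j, hj⟩ := (pathGraph_preconnected 4).exists_adj_of_nontrivial i
  ⟨j, f.map_adj_iff.2 hj⟩

lemma pathGraph_four_embedding_exists_not_adj (f : pathGraph 4 ↪g G) (i : Fin 4) :
    ∃ j, f i ≠ f j ∧ ¬ G.Adj (f i) (f j) :=
  let ⟨j, hij, hj⟩ := pathGraph_four_compl_preconnected.exists_adj_of_nontrivial i
  ⟨j, f.injective.ne hij, fun h => hj (f.map_adj_iff.1 h)⟩

end SimpleGraph

open SimpleGraph

namespace Cotree

variable {V : Type u} {b : Bool} {ts : List (Cotree V)} {t s u : Cotree V} {v w x y : V}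
  {Nx M N : Set V}

@[induction_eliminator]
protected theorem ind {motive : Cotree V → Prop} (leaf : ∀ v, motive (leaf v))
    (node : ∀ b ts, (∀ t ∈ ts, motive t) → motive (node b ts)) : ∀ t, motive t
  | .leaf v => leaf v
  | .node b ts => node b ts fun t _ => Cotree.ind leaf node t
decreasing_by simp_wf; have := List.sizeOf_lt_of_mem ‹t ∈ ts›; omega

@[simp] lemma leaves_leaf : (leaf v).leaves = [v] := by rw [leaves]

lemma leaves_node : (node b ts).leaves = ts.flatMap leaves := by
  rw [leaves, List.flatMap, List.flatMap, List.attach_map_val]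

lemma mem_leaves_node : v ∈ (node b ts).leaves ↔ ∃ t ∈ ts, v ∈ t.leaves := by
  rw [leaves_node, List.mem_flatMap]

@[simp] lemma subtrees_leaf : (leaf v).subtrees = [leaf v] := by rw [subtrees]

lemma mem_subtrees_node :
    u ∈ (node b ts).subtrees ↔ u = node b ts ∨ ∃ t ∈ ts, u ∈ t.subtrees := by
  rw [subtrees]
  simp only [List.mem_cons, List.mem_flatMap, List.mem_attach, true_and, Subtype.exists,
    exists_prop]

@[simp] lemma not_adj_leaf : ¬ (leaf v).adj x y := by rw [adj]; exact id

lemma adj_node_iff : (node b ts).adj x y ↔ (∃ t ∈ ts, t.adj x y) ∨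
    (b = true ∧ ∃ t ∈ ts, ∃ s ∈ ts, t ≠ s ∧ x ∈ t.leaves ∧ y ∈ s.leaves) := by
  rw [adj]
  simp only [List.mem_attach, true_and, Subtype.exists, exists_prop]

lemma valid_node : (node b ts).valid ↔ 2 ≤ ts.length ∧
    ∀ t ∈ ts, t.valid ∧ ∀ b' ts', t = node b' ts' → b' ≠ b := by
  rw [valid]
  simp only [List.mem_attach, Subtype.forall, forall_const]

@[simp] lemma forced_leaf : forced N (leaf v) ↔ v ∈ N := by rw [forced]

lemma forced_node : forced N (node b ts) ↔ full N (node b ts) ∨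
    (b = false ∧ ∀ t ∈ ts, ¬ hollow N t) ∨ (b = true ∧ ∀ t ∈ ts, forced N t) := by
  rw [forced]
  simp only [List.mem_attach, Subtype.forall, forall_const]

lemma valid_of_mem (hval : (node b ts).valid) (ht : t ∈ ts) : t.valid :=
  ((valid_node.1 hval).2 t ht).1

lemma nodup_leaves_of_mem (hnd : (node b ts).leaves.Nodup) (ht : t ∈ ts) : t.leaves.Nodup :=
  (List.nodup_flatMap.1 (leaves_node ▸ hnd)).1 t ht

lemma eq_of_mem_leaves (hnd : (node b ts).leaves.Nodup) (ht : t ∈ ts) (hs : s ∈ ts)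
    (hvt : v ∈ t.leaves) (hvs : v ∈ s.leaves) : t = s := by
  by_contra hts
  have : Std.Symm (Function.onFun List.Disjoint (leaves (V := V))) := ⟨fun _ _ h => h.symm⟩
  exact (List.nodup_flatMap.1 (leaves_node ▸ hnd)).2.forall ht hs hts hvt hvs

lemma exists_mem_leaves (hval : t.valid) : ∃ v, v ∈ t.leaves := by
  induction t with
  | leaf v => exact ⟨v, by simp⟩
  | node b ts ih =>
    have hlen : 0 < ts.length := by have := (valid_node.1 hval).1; omega
    obtain ⟨t, ht⟩ := List.exists_mem_of_length_pos hlen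
    obtain ⟨v, hv⟩ := ih t ht (valid_of_mem hval ht)
    exact ⟨v, mem_leaves_node.2 ⟨t, ht, hv⟩⟩

lemma exists_ne_of_mem (hval : (node b ts).valid) (hnd : (node b ts).leaves.Nodup)
    (ht : t ∈ ts) : ∃ s ∈ ts, s ≠ t := by
  by_contra! hall
  have hlen := (valid_node.1 hval).1
  have hdisj := List.pairwise_iff_getElem.1 (List.nodup_flatMap.1 (leaves_node ▸ hnd)).2 0 1
    (by omega) (by omega) Nat.zero_lt_one
  obtain ⟨v, hv⟩ := exists_mem_leaves (valid_of_mem hval ht)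
  rw [hall _ (List.getElem_mem _), hall _ (List.getElem_mem _)] at hdisj
  exact hdisj hv hv

lemma valid_of_mem_subtrees {T : Cotree V} (hval : T.valid) (ht : t ∈ T.subtrees) : t.valid := by
  induction T with
  | leaf v => simp_all
  | node b ts ih =>
    rcases mem_subtrees_node.1 ht with rfl | ⟨s, hs, hts⟩
    · exact hval
    · exact ih s hs (valid_of_mem hval hs) hts

lemma leaves_sublist_of_mem_subtrees {T : Cotree V} (ht : t ∈ T.subtrees) :
    t.leaves.Sublist T.leaves := by
  induction T with
  | leaf v => simp_all
  | node b ts ih =>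
    rcases mem_subtrees_node.1 ht with rfl | ⟨s, hs, hts⟩
    · exact List.Sublist.refl _
    · rw [leaves_node]
      exact (ih s hs hts).trans (List.sublist_flatten_of_mem (List.mem_map_of_mem hs))

lemma graphOf_adj : (graphOf t).Adj x y ↔ x ≠ y ∧ (t.adj x y ∨ t.adj y x) :=
  SimpleGraph.fromRel_adj _ _ _

lemma mem_leaves_of_adj (h : t.adj x y) : x ∈ t.leaves ∧ y ∈ t.leaves := by
  induction t with
  | leaf v => exact (not_adj_leaf h).elim
  | node b ts ih =>
    rcases adj_node_iff.1 h with ⟨t, ht, h⟩ | ⟨-, t, ht, s, hs, -, hx, hy⟩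
    · exact (ih t ht h).imp (fun hx => mem_leaves_node.2 ⟨t, ht, hx⟩)
        (fun hy => mem_leaves_node.2 ⟨t, ht, hy⟩)
    · exact ⟨mem_leaves_node.2 ⟨t, ht, hx⟩, mem_leaves_node.2 ⟨s, hs, hy⟩⟩

lemma mem_leaves_of_graphOf_adj (h : (graphOf t).Adj x y) : x ∈ t.leaves := by
  rcases (graphOf_adj.1 h).2 with h | h
  exacts [(mem_leaves_of_adj h).1, (mem_leaves_of_adj h).2]

lemma adj_node_iff_of_mem (hnd : (node b ts).leaves.Nodup) (ht : t ∈ ts) (hx : x ∈ t.leaves)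
    (hy : y ∈ t.leaves) : (node b ts).adj x y ↔ t.adj x y := by
  refine ⟨fun h => ?_, fun h => adj_node_iff.2 (.inl ⟨t, ht, h⟩)⟩
  rcases adj_node_iff.1 h with ⟨s, hs, h⟩ | ⟨-, s, hs, s', hs', hss', hxs, hys'⟩
  · rwa [← eq_of_mem_leaves hnd hs ht (mem_leaves_of_adj h).1 hx]
  · exact absurd ((eq_of_mem_leaves hnd hs ht hxs hx).trans
      (eq_of_mem_leaves hnd ht hs' hy hys')) hss'

lemma graphOf_node_adj_iff (hnd : (node b ts).leaves.Nodup) (ht : t ∈ ts) (hx : x ∈ t.leaves)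
    (hy : y ∈ t.leaves) : (graphOf (node b ts)).Adj x y ↔ (graphOf t).Adj x y := by
  rw [graphOf_adj, graphOf_adj, adj_node_iff_of_mem hnd ht hx hy, adj_node_iff_of_mem hnd ht hy hx]

lemma graphOf_series_adj (hnd : (node true ts).leaves.Nodup) (ht : t ∈ ts) (hs : s ∈ ts)
    (hts : t ≠ s) (hx : x ∈ t.leaves) (hy : y ∈ s.leaves) :
    (graphOf (node true ts)).Adj x y :=
  graphOf_adj.2 ⟨fun hxy => hts (eq_of_mem_leaves hnd ht hs hx (hxy ▸ hy)),
    .inl (adj_node_iff.2 (.inr ⟨rfl, t, ht, s, hs, hts, hx, hy⟩))⟩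

lemma mem_leaves_of_graphOf_parallel_adj (hnd : (node false ts).leaves.Nodup) (ht : t ∈ ts)
    (hx : x ∈ t.leaves) (h : (graphOf (node false ts)).Adj x y) : y ∈ t.leaves := by
  obtain ⟨s, hs, hxs, hys⟩ : ∃ s ∈ ts, x ∈ s.leaves ∧ y ∈ s.leaves := by
    rcases (graphOf_adj.1 h).2 with h | h <;>
      obtain ⟨s, hs, h⟩ | ⟨hb, -⟩ := adj_node_iff.1 h
    exacts [⟨s, hs, mem_leaves_of_adj h⟩, absurd hb Bool.false_ne_true,
      ⟨s, hs, (mem_leaves_of_adj h).symm⟩, absurd hb Bool.false_ne_true]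
  rwa [eq_of_mem_leaves hnd ht hs hx hxs]

theorem isCograph_graphOf (hnd : t.leaves.Nodup) : IsCograph (graphOf t) := by
  rw [isCograph_iff_isEmpty_embedding]
  refine ⟨fun f => ?_⟩
  induction t with
  | leaf v =>
    obtain ⟨j, hj⟩ := pathGraph_four_embedding_exists_adj f 0
    simp [graphOf_adj] at hj
  | node b ts ih =>
    have hleaf i : f i ∈ (node b ts).leaves :=
      let ⟨_, hj⟩ := pathGraph_four_embedding_exists_adj f i
      mem_leaves_of_graphOf_adj hj
    obtain ⟨c, hc, hc0⟩ := mem_leaves_node.1 (hleaf 0)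
    have hall i : f i ∈ c.leaves := by
      cases b
      · refine (pathGraph_preconnected 4).mem_of_forall_adj (S := {i | f i ∈ c.leaves})
          (fun i j hij hi => ?_) hc0
        exact mem_leaves_of_graphOf_parallel_adj hnd hc hi (f.map_adj_iff.2 hij)
      · refine pathGraph_four_compl_preconnected.mem_of_forall_adj (S := {i | f i ∈ c.leaves})
          (fun i j hij hi => ?_) hc0
        by_contra hj
        obtain ⟨d, hd, hjd⟩ := mem_leaves_node.1 (hleaf j)
        have hcd : c ≠ d := fun h => hj (h ▸ hjd)
        exact hij.2 (f.map_adj_iff.1 (graphOf_series_adj hnd hc hd hcd hi hjd))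
    exact ih c hc (nodup_leaves_of_mem hnd hc)
      (Embedding.ofAdjIff f fun i j => graphOf_node_adj_iff hnd hc (hall i) (hall j))

lemma graphPlus_adj_some_some : (graphPlus u N).Adj (some v) (some w) ↔ (graphOf u).Adj v w := by
  simp [graphPlus, graphOf_adj]

@[simp] lemma graphPlus_adj_none_some : (graphPlus u N).Adj none (some w) ↔ w ∈ N := by
  simp [graphPlus]

@[simp] lemma graphPlus_adj_some_none : (graphPlus u N).Adj (some v) none ↔ v ∈ N := by
  simp [graphPlus]

lemma mem_leaves_of_graphPlus_adj (hN : ∀ v ∈ N, v ∈ u.leaves) {y : Option V}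
    (h : (graphPlus u N).Adj (some v) y) : v ∈ u.leaves := by
  cases y with
  | none => exact hN v (graphPlus_adj_some_none.1 h)
  | some w => exact mem_leaves_of_graphOf_adj (graphPlus_adj_some_some.1 h)

lemma mem_leaves_of_embedding_graphPlus (hN : ∀ v ∈ N, v ∈ u.leaves)
    (f : pathGraph 4 ↪g graphPlus u N) {i : Fin 4} (hi : f i = some v) : v ∈ u.leaves :=
  let ⟨_, hj⟩ := pathGraph_four_embedding_exists_adj f i
  mem_leaves_of_graphPlus_adj hN (hi ▸ hj)

lemma exists_eq_none_of_embedding_graphPlus (hnd : u.leaves.Nodup)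
    (f : pathGraph 4 ↪g graphPlus u N) : ∃ i, f i = none := by
  by_contra! hsome
  choose g hg using fun i => Option.ne_none_iff_exists'.1 (hsome i)
  refine not_isCograph_of_embedding ⟨⟨g, fun i j hij => f.injective (by rw [hg, hg, hij])⟩,
    fun {i j} => ?_⟩ (isCograph_graphOf hnd)
  rw [← f.map_adj_iff, hg, hg, graphPlus_adj_some_some]
  rfl

lemma graphPlus_adj_iff_of_mem (hnd : (node b ts).leaves.Nodup) (ht : t ∈ ts)
    (hMN : ∀ v ∈ t.leaves, v ∈ M ↔ v ∈ N) {p q : Option V}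
    (hp : ∀ v, p = some v → v ∈ t.leaves) (hq : ∀ w, q = some w → w ∈ t.leaves) :
    (graphPlus t M).Adj p q ↔ (graphPlus (node b ts) N).Adj p q := by
  cases p with
  | none => cases q with
    | none => simp only [SimpleGraph.irrefl]
    | some w => simp only [graphPlus_adj_none_some, hMN w (hq w rfl)]
  | some v => cases q with
    | none => simp only [graphPlus_adj_some_none, hMN v (hp v rfl)]
    | some w => rw [graphPlus_adj_some_some, graphPlus_adj_some_some,
        graphOf_node_adj_iff hnd ht (hp v rfl) (hq w rfl)]

theorem isCograph_graphPlus_leaves (hnd : u.leaves.Nodup) :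
    IsCograph (graphPlus u {v | v ∈ u.leaves}) := by
  rw [isCograph_iff_isEmpty_embedding]
  refine ⟨fun f => ?_⟩
  obtain ⟨i, hi⟩ := exists_eq_none_of_embedding_graphPlus hnd f
  obtain ⟨j, hij, hj⟩ := pathGraph_four_embedding_exists_not_adj f i
  obtain ⟨w, hw⟩ := Option.ne_none_iff_exists'.1 (hi ▸ hij).symm
  rw [hi, hw, graphPlus_adj_none_some] at hj
  exact hj (mem_leaves_of_embedding_graphPlus (fun _ => id) f hw)

theorem isCograph_graphPlus_inter_leaves (hnd : (node b ts).leaves.Nodup) (ht : t ∈ ts)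
    (hN : IsCograph (graphPlus (node b ts) N)) :
    IsCograph (graphPlus t (N ∩ {v | v ∈ t.leaves})) := by
  rw [isCograph_iff_isEmpty_embedding] at hN ⊢
  refine ⟨fun f => hN.false <| Embedding.ofAdjIff f fun i j => ?_⟩
  have hleaf i v := mem_leaves_of_embedding_graphPlus (v := v) (i := i) (fun _ => And.right) f
  exact graphPlus_adj_iff_of_mem hnd ht (fun v hv => ⟨And.left, fun h => ⟨h, hv⟩⟩)
    (hleaf i) (hleaf j)

theorem isCograph_graphPlus_parallel_diff (hnd : (node false ts).leaves.Nodup) (ht : t ∈ ts) :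
    IsCograph
      (graphPlus (node false ts) {v | v ∈ (node false ts).leaves ∧ v ∉ t.leaves}) := by
  rw [isCograph_iff_isEmpty_embedding]
  refine ⟨fun f => ?_⟩
  obtain ⟨i₀, hi₀⟩ := exists_eq_none_of_embedding_graphPlus hnd f
  -- no edge of `G_u + x` leaves `{x} ∪ (V(u) \ V(t))`, so the connected `P₄` stays inside it
  have hout i : ∀ v, f i = some v → v ∉ t.leaves := by
    refine (pathGraph_preconnected 4).mem_of_forall_adj
      (S := {i | ∀ v, f i = some v → v ∉ t.leaves}) (fun i j hij hi w hj hw => ?_)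
      (fun v hv => absurd (hi₀.symm.trans hv) (Option.some_ne_none v).symm)
    have hadj := f.map_adj_iff.2 hij
    rw [hj] at hadj
    cases hfi : f i with
    | none => rw [hfi, graphPlus_adj_none_some] at hadj; exact hadj.2 hw
    | some v =>
      rw [hfi, graphPlus_adj_some_some] at hadj
      exact hi v hfi (mem_leaves_of_graphOf_parallel_adj hnd ht hw hadj.symm)
  obtain ⟨j, hij, hj⟩ := pathGraph_four_embedding_exists_not_adj f i₀
  obtain ⟨w, hw⟩ := Option.ne_none_iff_exists'.1 (hi₀ ▸ hij).symm
  rw [hi₀, hw, graphPlus_adj_none_some] at hj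
  exact hj ⟨mem_leaves_of_embedding_graphPlus (fun _ => And.left) f hw, hout j w hw⟩

theorem isCograph_graphPlus_series_union (hnd : (node true ts).leaves.Nodup) (ht : t ∈ ts)
    (hM : ∀ v ∈ M, v ∈ t.leaves) (hMcog : IsCograph (graphPlus t M)) :
    IsCograph
      (graphPlus (node true ts) (M ∪ {v | v ∈ (node true ts).leaves ∧ v ∉ t.leaves})) := by
  rw [isCograph_iff_isEmpty_embedding] at hMcog ⊢
  refine ⟨fun f => ?_⟩
  have hN :
      ∀ v ∈ M ∪ {v | v ∈ (node true ts).leaves ∧ v ∉ t.leaves}, v ∈ (node true ts).leaves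
    | v, .inl hv => mem_leaves_node.2 ⟨t, ht, hM v hv⟩
    | v, .inr hv => hv.1
  obtain ⟨i₀, hi₀⟩ := exists_eq_none_of_embedding_graphPlus hnd f
  -- all edges between `{x} ∪ V(t)` and the rest of `V(u)` are present, so the co-connected `P₄`
  -- stays inside `{x} ∪ V(t)`
  have hin i : ∀ v, f i = some v → v ∈ t.leaves := by
    refine pathGraph_four_compl_preconnected.mem_of_forall_adj
      (S := {i | ∀ v, f i = some v → v ∈ t.leaves}) (fun i j hij hi w hj => ?_)
      (fun v hv => absurd (hi₀.symm.trans hv) (Option.some_ne_none v).symm)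
    by_contra hw
    refine hij.2 (f.map_adj_iff.1 ?_)
    have hwu := mem_leaves_of_embedding_graphPlus hN f hj
    rw [hj]
    cases hfi : f i with
    | none => exact graphPlus_adj_none_some.2 (.inr ⟨hwu, hw⟩)
    | some v =>
      obtain ⟨d, hd, hwd⟩ := mem_leaves_node.1 hwu
      exact graphPlus_adj_some_some.2 <|
        graphOf_series_adj hnd ht hd (fun h => hw (h ▸ hwd)) (hi v hfi) hwd
  exact hMcog.false <| Embedding.ofAdjIff f fun i j => (graphPlus_adj_iff_of_mem hnd ht
    (fun v hv => ⟨.inl, fun h => h.elim id fun h => absurd hv h.2⟩) (hin i) (hin j)).symm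

theorem isCograph_graphPlus_empty (hnd : u.leaves.Nodup) : IsCograph (graphPlus u ∅) := by
  rw [isCograph_iff_isEmpty_embedding]
  refine ⟨fun f => ?_⟩
  obtain ⟨i, hi⟩ := exists_eq_none_of_embedding_graphPlus hnd f
  obtain ⟨j, hj⟩ := pathGraph_four_embedding_exists_adj f i
  rw [hi] at hj
  cases hfj : f j with
  | none => exact (hfj ▸ hj).ne rfl
  | some w => exact (graphPlus_adj_none_some.1 (hfj ▸ hj)).elim

lemma not_isParallel_of_mem (hval : (node false ts).valid) (ht : t ∈ ts) : ¬ t.isParallel := by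
  rcases t with _ | ⟨_ | _, ss⟩
  exacts [id, fun _ => ((valid_node.1 hval).2 _ ht).2 false ss rfl rfl, id]

-- `G_t` is connected unless `t` is a parallel node.
lemma exists_graphOf_adj_mem_not_mem (hval : t.valid) (hnd : t.leaves.Nodup)
    (hpar : ¬ t.isParallel) {a c : V} (ha : a ∈ t.leaves) (haN : a ∈ N) (hc : c ∈ t.leaves)
    (hcN : c ∉ N) : ∃ a' c', (graphOf t).Adj a' c' ∧ a' ∈ N ∧ c' ∉ N := by
  rcases t with v | ⟨_ | _, ts⟩
  · simp only [leaves_leaf, List.mem_singleton] at ha hc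
    exact absurd (hc ▸ ha ▸ haN) hcN
  · exact absurd trivial hpar
  obtain ⟨d, hd, had⟩ := mem_leaves_node.1 ha
  obtain ⟨e, he, hce⟩ := mem_leaves_node.1 hc
  by_cases hde : d = e
  · subst hde
    obtain ⟨s, hs, hsd⟩ := exists_ne_of_mem hval hnd hd
    obtain ⟨z, hz⟩ := exists_mem_leaves (valid_of_mem hval hs)
    by_cases hzN : z ∈ N
    · exact ⟨z, c, graphOf_series_adj hnd hs hd hsd hz hce, hzN, hcN⟩
    · exact ⟨a, z, graphOf_series_adj hnd hd hs hsd.symm had hz, haN, hzN⟩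
  · exact ⟨a, c, graphOf_series_adj hnd hd he hde had hce, haN, hcN⟩

lemma not_isCograph_graphPlus_parallel (hnd : (node false ts).leaves.Nodup) (ht : t ∈ ts)
    (hs : s ∈ ts) (hst : s ≠ t) {a c z : V} (hac : (graphOf t).Adj a c) (haN : a ∈ N)
    (hcN : c ∉ N) (hz : z ∈ s.leaves) (hzN : z ∈ N) :
    ¬ IsCograph (graphPlus (node false ts) N) := by
  have ha := mem_leaves_of_graphOf_adj hac
  have hc := mem_leaves_of_graphOf_adj hac.symm
  have hzt : z ∉ t.leaves := fun h => hst (eq_of_mem_leaves hnd hs ht hz h)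
  have hnadj {y} (hy : y ∈ t.leaves) : ¬ (graphPlus (node false ts) N).Adj (some y) (some z) :=
    fun h => hzt (mem_leaves_of_graphOf_parallel_adj hnd ht hy (graphPlus_adj_some_some.1 h))
  refine not_isCograph_of_induced_path (a := some c) (b := some a) (c := none) (d := some z)
    (graphPlus_adj_some_some.2 ((graphOf_node_adj_iff hnd ht hc ha).2 hac.symm))
    (graphPlus_adj_some_none.2 haN) (graphPlus_adj_none_some.2 hzN)
    (mt graphPlus_adj_some_none.1 hcN) (hnadj hc) (hnadj ha) (Option.some_ne_none c) ?_ ?_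
  · exact fun h => hzt (Option.some_inj.1 h ▸ hc)
  · exact fun h => hzt (Option.some_inj.1 h ▸ ha)

theorem isConstrainedCompletion_leaves (hnd : u.leaves.Nodup) :
    IsConstrainedCompletion u (Nx ∩ {v | v ∈ u.leaves}) {v | v ∈ u.leaves} :=
  ⟨Set.inter_subset_right, fun _ => id, isCograph_graphPlus_leaves hnd⟩

theorem eq_leaves_of_forced (hval : u.valid) (hnd : u.leaves.Nodup) (hf : forced Nx u)
    (hN : IsConstrainedCompletion u (Nx ∩ {v | v ∈ u.leaves}) N) :
    N = {v | v ∈ u.leaves} := by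
  induction u generalizing N with
  | leaf x =>
    refine Set.Subset.antisymm hN.2.1 fun v hv => ?_
    obtain rfl : v = x := by simpa using hv
    exact hN.1 ⟨forced_leaf.1 hf, hv⟩
  | node b ts ih =>
    obtain ⟨hsub, hNu, hcog⟩ := hN
    refine Set.Subset.antisymm hNu fun v hv => ?_
    obtain ⟨t, ht, hvt⟩ := mem_leaves_node.1 hv
    rcases forced_node.1 hf with hfull | ⟨rfl, hnh⟩ | ⟨rfl, hfor⟩
    · exact hsub ⟨hfull v hv, hv⟩
    · by_contra hvN
      have hNx {s} (hs : s ∈ ts) : ∃ z ∈ s.leaves, z ∈ N := by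
        obtain ⟨z, hz, hzN⟩ := not_forall₂.1 (hnh s hs)
        exact ⟨z, hz, hsub ⟨not_not.1 hzN, mem_leaves_node.2 ⟨s, hs, hz⟩⟩⟩
      obtain ⟨z, hzt, hzN⟩ := hNx ht
      obtain ⟨s, hs, hst⟩ := exists_ne_of_mem hval hnd ht
      obtain ⟨z', hz's, hz'N⟩ := hNx hs
      obtain ⟨a, c, hac, haN, hcN⟩ := exists_graphOf_adj_mem_not_mem (valid_of_mem hval ht)
        (nodup_leaves_of_mem hnd ht) (not_isParallel_of_mem hval ht) hzt hzN hvt hvN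
      exact not_isCograph_graphPlus_parallel hnd ht hs hst hac haN hcN hz's hz'N hcog
    · have hNt := ih t ht (valid_of_mem hval ht) (nodup_leaves_of_mem hnd ht) (hfor t ht)
        (N := N ∩ {v | v ∈ t.leaves})
        ⟨fun w hw => ⟨hsub ⟨hw.1, mem_leaves_node.2 ⟨t, ht, hw.2⟩⟩, hw.2⟩, fun _ => And.right,
          isCograph_graphPlus_inter_leaves hnd ht hcog⟩
      exact (hNt.ge hvt).1

theorem exists_ne_leaves_of_not_forced (hval : u.valid) (hnd : u.leaves.Nodup)
    (hf : ¬ forced Nx u) : ∃ N, IsConstrainedCompletion u (Nx ∩ {v | v ∈ u.leaves}) N ∧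
      N ≠ {v | v ∈ u.leaves} := by
  induction u with
  | leaf x =>
    refine ⟨∅, ⟨fun v hv => ?_, fun _ => False.elim, isCograph_graphPlus_empty hnd⟩, ?_⟩
    · obtain rfl : v = x := by simpa using hv.2
      exact hf (forced_leaf.2 hv.1)
    · exact fun h => h.ge (by simp : x ∈ {v | v ∈ (leaf x).leaves})
  | node b ts ih =>
    rw [forced_node] at hf
    push Not at hf
    obtain ⟨-, hpar, hser⟩ := hf
    cases b
    · obtain ⟨t, ht, hhol⟩ := hpar rfl
      obtain ⟨w, hw⟩ := exists_mem_leaves (valid_of_mem hval ht)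
      refine ⟨{v | v ∈ (node false ts).leaves ∧ v ∉ t.leaves},
        ⟨fun v hv => ⟨hv.2, fun hvt => hhol v hvt hv.1⟩, fun _ => And.left,
          isCograph_graphPlus_parallel_diff hnd ht⟩, fun h => ?_⟩
      exact (h.ge (mem_leaves_node.2 ⟨t, ht, hw⟩)).2 hw
    · obtain ⟨t, ht, hnt⟩ := hser rfl
      obtain ⟨M, ⟨hMsub, hMt, hMcog⟩, hMne⟩ :=
        ih t ht (valid_of_mem hval ht) (nodup_leaves_of_mem hnd ht) hnt
      obtain ⟨w, hwt, hwM⟩ : ∃ w ∈ t.leaves, w ∉ M := by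
        by_contra! h
        exact hMne (Set.Subset.antisymm hMt h)
      refine ⟨M ∪ {v | v ∈ (node true ts).leaves ∧ v ∉ t.leaves},
        ⟨fun v hv => ?_, ?_, isCograph_graphPlus_series_union hnd ht hMt hMcog⟩, fun h => ?_⟩
      · by_cases hvt : v ∈ t.leaves
        exacts [.inl (hMsub ⟨hv.1, hvt⟩), .inr ⟨hv.2, hvt⟩]
      · rintro v (hv | hv)
        exacts [mem_leaves_node.2 ⟨t, ht, hMt v hv⟩, hv.1]
      · rcases h.ge (mem_leaves_node.2 ⟨t, ht, hwt⟩) with hw | hw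
        exacts [hwM hw, hw.2 hwt]

end Cotree

theorem stmt_8_general {V : Type u} (T : Cotree V) (Nx : Set V)
    (hval : T.valid) (hnd : T.leaves.Nodup)
    (u : Cotree V) (hu : u ∈ T.subtrees) :
    Cotree.forced Nx u ↔
      ∀ N' : Set V,
        Cotree.IsConstrainedCompletion u (Nx ∩ {v | v ∈ u.leaves}) N' ↔
          N' = {v | v ∈ u.leaves} := by
  have hvalu := Cotree.valid_of_mem_subtrees hval hu
  have hndu := (Cotree.leaves_sublist_of_mem_subtrees hu).nodup hnd
  refine ⟨fun hf N' => ⟨Cotree.eq_leaves_of_forced hvalu hndu hf,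
    fun h => by rw [h]; exact Cotree.isConstrainedCompletion_leaves hndu⟩, fun h => ?_⟩
  by_contra hf
  obtain ⟨N', hN', hne⟩ := Cotree.exists_ne_leaves_of_not_forced hvalu hndu hf
  exact hne ((h N').1 hN')

theorem stmt_8 {V : Type u} (T : Cotree V) (Nx : Set V)
    (hval : T.valid) (hnd : T.leaves.Nodup) (hNx : ∀ v ∈ Nx, v ∈ T.leaves)
    (u : Cotree V) (hu : u ∈ T.subtrees) :
    Cotree.forced Nx u ↔
      ∀ N' : Set V,
        Cotree.IsConstrainedCompletion u (Nx ∩ {v | v ∈ u.leaves}) N' ↔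
          N' = {v | v ∈ u.leaves} :=
  stmt_8_general T Nx hval hnd u hu
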